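/- Consider pairs (A, A_1) where A is a formal power series in ℚ[[t, z]] and A_1 is a formal power series in ℚ[[t]] (viewed in ℚ[[t, z]] via the canonical embedding), satisfying in ℚ[[t, z]] the equation z·(−A + 1 + 2t(1+z)·A² + t(1+z)·(A_1 − 1)) + t(1+z)·(A − (1+z)·A_1) + t(1+z)·z = 0. Then: (i) there is at most one such pair; (ii) for any such pair, A_1 is the specialization of A at z = 0; and (iii) for any such pair, A_1 satisfies the cubic equation 64t³·A_1³ + 2t(24t² − 36t + 1)·A_1² + (−15t³ + 9t² + 19t − 1)·A_1 + (t³ + 27t² − 19t + 1) = 0 in ℚ[[t]]. -/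

import Mathlib

open MvPowerSeries

/-- The canonical embedding of `ℚ[[t]]` into `ℚ[[t, z]]` (variable `0` is `t`,
variable `1` is `z`): a univariate series is viewed as a bivariate series not
depending on `z`. -/
noncomputable def embT (f : PowerSeries ℚ) : MvPowerSeries (Fin 2) ℚ :=
  fun m => if m 1 = 0 then PowerSeries.coeff (m 0) f else 0

/-- The kernel-form equation of Section 5.4.1 of the paper (with `z = x − 1`):
`z(−A + 1 + 2t(1+z)A² + t(1+z)(A₁−1)) + t(1+z)(A − (1+z)A₁) + t(1+z)z = 0`,
where `A = U(t;x)` counts the superset `𝒰⁽¹⁾` of planar Eulerian orientations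
and `A₁ = U(t;1)`. -/
def KernelEq1 (A : MvPowerSeries (Fin 2) ℚ) (A1 : PowerSeries ℚ) : Prop :=
  (X 1 : MvPowerSeries (Fin 2) ℚ) *
      (-A + 1 + 2 * X 0 * (1 + X 1) * A ^ 2 + X 0 * (1 + X 1) * (embT A1 - 1))
    + X 0 * (1 + X 1) * (A - (1 + X 1) * embT A1)
    + X 0 * (1 + X 1) * X 1 = 0

/-!
Read `ℚ[[t, z]]` as `ℚ[[t]][[z]]`. Setting `z = 0` in the equation leaves `t (A(t, 0) − A₁) = 0`.
With `S = t(1+z)(1+4zA) − z`, completing the square turns the equation into `S² = Δ(z)` for a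
cubic `Δ` in `z` over `ℚ[[t]]`. As `S ≡ −z mod t`, Weierstrass preparation gives
`S = (z − w)·u` with `w ∈ tℚ[[t]]`; so `(z − w)²` divides `Δ`, uniqueness of Weierstrass division
makes `w` a double root of `Δ`, and the discriminant `32t³·(cubic in A₁)` of `Δ` vanishes.
Similarly, two solutions satisfy `(A − A')·g = t(1+z)(A₁ − A₁')` with `g ≡ −z mod t`, and
dividing by the linear factor of `g` forces both differences to vanish.
-/

namespace Polynomial

theorem isDistinguishedAt_X_sub_C_pow {A : Type*} [CommRing A] {I : Ideal A} {w : A} (hw : w ∈ I)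
    (n : ℕ) : ((X - C w) ^ n).IsDistinguishedAt I := by
  have hlin : (X - C w).IsDistinguishedAt I := by
    refine ⟨⟨fun {i} hi => ?_⟩, monic_X_sub_C w⟩
    obtain rfl : i = 0 := by have := natDegree_X_sub_C_le w; omega
    simpa using hw
  induction n with
  | zero => exact ⟨⟨by simp⟩, monic_one⟩
  | succ n ih => rw [pow_succ]; exact ih.mul hlin

end Polynomial

namespace PowerSeries

open scoped Polynomial

variable {A : Type*} [CommRing A]

theorem eq_zero_of_X_sub_C_pow_mul_eq {I : Ideal A} [IsHausdorff I A] {w : A} (hw : w ∈ I)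
    {n : ℕ} {q : A⟦X⟧} {r : A[X]} (hr : r.degree < n) (h : (X - C w) ^ n * q = (r : A⟦X⟧)) :
    q = 0 ∧ r = 0 := by
  rcases eq_or_ne I ⊤ with rfl | hI
  · have := ‹IsHausdorff ⊤ A›.subsingleton
    exact ⟨Subsingleton.elim _ _, Subsingleton.elim _ _⟩
  have : Nontrivial A := ⟨⟨0, 1, fun h => hI ((Ideal.eq_top_iff_one I).2 (h ▸ I.zero_mem))⟩⟩
  have hf := Polynomial.isDistinguishedAt_X_sub_C_pow hw n
  have horder := hf.coe_natDegree_eq_order_map _ 1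
    (by rwa [map_one, ← Ideal.ne_top_iff_one]) (mul_one _).symm
  refine (hf.isWeierstrassDivisorAt' (I := I)).eq_zero_of_mul_eq ?_ (by simpa using h)
  rw [← horder]
  rwa [(Polynomial.monic_X_sub_C w).natDegree_pow, Polynomial.natDegree_X_sub_C, mul_one]

open IsLocalRing in
theorem exists_X_sub_C_mul_eq_C_mul_sub_X [IsLocalRing A] [IsAdicComplete (maximalIdeal A) A]
    {t : A} (ht : t ∈ maximalIdeal A) (F : A⟦X⟧) :
    ∃ w ∈ maximalIdeal A, ∃ h : A⟦X⟧, IsUnit h ∧ C t * F - X = (X - C w) * h := by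
  have hmap : (C t * F - X).map (residue A) = -X := by
    simp [(residue_eq_zero_iff t).2 ht]
  have hg : (C t * F - X).map (residue A) ≠ 0 := by
    rw [hmap]; exact neg_ne_zero.2 X_ne_zero
  obtain ⟨f, h, H⟩ := exists_isWeierstrassFactorization hg
  have hdeg : f.natDegree = 1 := by
    rw [H.natDegree_eq_toNat_order_map, hmap, order_neg, order_X]; rfl
  refine ⟨-f.coeff 0, neg_mem (H.isDistinguishedAt.mem (by omega)), h, H.isUnit, ?_⟩
  rw [H.eq_mul, H.isDistinguishedAt.monic.eq_X_add_C hdeg]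
  simp

instance {k : Type*} [Field k] : IsAdicComplete (IsLocalRing.maximalIdeal k⟦X⟧) k⟦X⟧ := by
  rw [maximalIdeal_eq_span_X]
  infer_instance

end PowerSeries

namespace Cubic

open scoped Polynomial

variable {A : Type*} [CommRing A]

theorem discr_eq_zero_of_double_root {P : Cubic A} {w : A}
    (h₀ : P.a * w ^ 3 + P.b * w ^ 2 + P.c * w + P.d = 0)
    (h₁ : 3 * P.a * w ^ 2 + 2 * P.b * w + P.c = 0) : P.discr = 0 := by
  obtain ⟨a, b, c, d⟩ := P
  obtain rfl : c = -3 * a * w ^ 2 - 2 * b * w := by linear_combination h₁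
  obtain rfl : d = 2 * a * w ^ 3 + b * w ^ 2 := by linear_combination h₀ - w * h₁
  simp only [discr]
  ring

theorem discr_eq_zero_of_X_sub_C_sq_dvd {I : Ideal A} [IsHausdorff I A] {w : A} (hw : w ∈ I)
    {P : Cubic A} (h : (PowerSeries.X - PowerSeries.C w) ^ 2 ∣ (P.toPoly : PowerSeries A)) :
    P.discr = 0 := by
  obtain ⟨q, hq⟩ := h
  set e₀ := P.a * w ^ 3 + P.b * w ^ 2 + P.c * w + P.d
  set e₁ := 3 * P.a * w ^ 2 + 2 * P.b * w + P.c
  let Q : A[X] := Polynomial.C P.a * Polynomial.X + Polynomial.C (2 * P.a * w + P.b)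
  let r : A[X] := Polynomial.C e₁ * Polynomial.X + Polynomial.C (e₀ - e₁ * w)
  have htaylor : P.toPoly = (Polynomial.X - Polynomial.C w) ^ 2 * Q + r := by
    simp only [toPoly, Q, r, e₀, e₁, map_add, map_sub, map_mul, map_pow, map_ofNat]
    ring
  have hrem : (PowerSeries.X - PowerSeries.C w) ^ 2 * (q - (Q : PowerSeries A))
      = (r : PowerSeries A) := by
    rw [mul_sub, ← hq, htaylor]
    push_cast
    ring
  obtain ⟨-, hr⟩ := PowerSeries.eq_zero_of_X_sub_C_pow_mul_eq hw Polynomial.degree_linear_lt hrem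
  have h₁ : e₁ = 0 := by simpa [r] using congrArg (Polynomial.coeff · 1) hr
  have h₀ : e₀ = 0 := by simpa [r, h₁] using congrArg (Polynomial.coeff · 0) hr
  exact discr_eq_zero_of_double_root h₀ h₁

end Cubic

namespace MvPowerSeries

variable (R : Type*) [CommRing R]

def finTwoEquivOptionUnit : Fin 2 ≃ Option Unit where
  toFun := ![some (), none]
  invFun o := o.elim 1 fun _ => 0
  left_inv := by decide
  right_inv := by decide

noncomputable def bivariateEquiv : MvPowerSeries (Fin 2) R ≃ₐ[R] PowerSeries (PowerSeries R) :=
  (renameEquiv R finTwoEquivOptionUnit).trans (optionEquivLeft Unit R)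

variable {R}

theorem coeff_coeff_bivariateEquiv (F : MvPowerSeries (Fin 2) R) (n k : ℕ) :
    PowerSeries.coeff n (PowerSeries.coeff k (bivariateEquiv R F))
      = coeff (Finsupp.single (0 : Fin 2) n + Finsupp.single 1 k) F := by
  have hx : (Finsupp.single () n).optionElim k
      = (Finsupp.single (0 : Fin 2) n + Finsupp.single 1 k).embDomain
          finTwoEquivOptionUnit.toEmbedding := by
    ext (_ | _) <;> simp [finTwoEquivOptionUnit]
  change coeff (Finsupp.single () n) (PowerSeries.coeff k
    (optionEquivLeft Unit R (renameEquiv R finTwoEquivOptionUnit F))) = _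
  rw [coeff_coeff_optionEquivLeft, hx]
  exact coeff_embDomain_rename _ _ _

@[simp]
theorem bivariateEquiv_X_zero : bivariateEquiv R (X 0) = PowerSeries.C PowerSeries.X :=
  (congrArg (optionEquivLeft Unit R) (rename_X _ 0)).trans (optionEquivLeft_X_some ())

@[simp]
theorem bivariateEquiv_X_one : bivariateEquiv R (X 1) = PowerSeries.X :=
  (congrArg (optionEquivLeft Unit R) (rename_X _ 1)).trans optionEquivLeft_X_none

end MvPowerSeries

theorem bivariateEquiv_embT (f : PowerSeries ℚ) : bivariateEquiv ℚ (embT f) = PowerSeries.C f := by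
  ext k n
  rw [coeff_coeff_bivariateEquiv, PowerSeries.coeff_C]
  change (if _ then _ else _) = _
  split_ifs <;> simp_all

section KernelEquation

open IsLocalRing

def kernelPoly {S : Type*} [CommRing S] (t z a a₁ : S) : S :=
  z * (-a + 1 + 2 * t * (1 + z) * a ^ 2 + t * (1 + z) * (a₁ - 1))
    + t * (1 + z) * (a - (1 + z) * a₁) + t * (1 + z) * z

theorem map_kernelPoly {S T F : Type*} [CommRing S] [CommRing T] [FunLike F S T]
    [RingHomClass F S T] (f : F) (t z a a₁ : S) :
    f (kernelPoly t z a a₁) = kernelPoly (f t) (f z) (f a) (f a₁) := by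
  simp [kernelPoly, map_ofNat f 2]

/-- `(t(1+z)(4za+1) − z)² − 8tz(1+z)·kernelPoly t z a a₁`, as a cubic in `z`; it does not
depend on `a`. -/
def kernelCubic {S : Type*} [CommRing S] (t a₁ : S) : Cubic S :=
  ⟨8 * t ^ 2 * a₁ - 8 * t, t ^ 2 - 10 * t + 1 + 16 * t ^ 2 * a₁, 2 * t ^ 2 - 2 * t + 8 * t ^ 2 * a₁,
    t ^ 2⟩

theorem discr_kernelCubic {S : Type*} [CommRing S] (t a₁ : S) :
    (kernelCubic t a₁).discr = 32 * t ^ 3 * (64 * t ^ 3 * a₁ ^ 3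
      + 2 * t * (24 * t ^ 2 - 36 * t + 1) * a₁ ^ 2
      + (-15 * t ^ 3 + 9 * t ^ 2 + 19 * t - 1) * a₁ + (t ^ 3 + 27 * t ^ 2 - 19 * t + 1)) := by
  simp only [Cubic.discr, kernelCubic]
  ring

namespace PowerSeries

open scoped Polynomial

variable {R : Type*} [CommRing R]

theorem eq_constantCoeff_of_kernelPoly_eq_zero [IsDomain R] {t b : R} (ht : t ≠ 0) {a : R⟦X⟧}
    (h : kernelPoly (C t) X a (C b) = 0) : b = constantCoeff a := by
  have h₀ := congrArg constantCoeff h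
  rw [map_kernelPoly, constantCoeff_C, constantCoeff_X, constantCoeff_C, map_zero] at h₀
  have : t * (constantCoeff a - b) = 0 := by
    unfold kernelPoly at h₀
    linear_combination h₀
  exact (sub_eq_zero.1 ((mul_eq_zero.1 this).resolve_left ht)).symm

variable [IsLocalRing R] [IsAdicComplete (maximalIdeal R) R]

theorem eq_of_kernelPoly_eq_zero [IsDomain R] {t : R} (ht : t ∈ maximalIdeal R) (ht₀ : t ≠ 0)
    {a a' : R⟦X⟧} {b b' : R} (h : kernelPoly (C t) X a (C b) = 0)
    (h' : kernelPoly (C t) X a' (C b') = 0) : a = a' ∧ b = b' := by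
  obtain ⟨w, hw, u, hu, hfac⟩ :=
    exists_X_sub_C_mul_eq_C_mul_sub_X ht ((1 + X) * (1 + 2 * X * (a + a')))
  have hdiff : (X - C w) ^ 1 * (u * (a - a') - C (t * (b - b')))
      = ((Polynomial.C (t * (1 + w) * (b - b')) : R[X]) : R⟦X⟧) := by
    rw [Polynomial.coe_C]
    simp only [map_mul, map_add, map_sub, map_one]
    unfold kernelPoly at h h'
    linear_combination h - h' - (a - a') * hfac
  obtain ⟨hq, hr⟩ := eq_zero_of_X_sub_C_pow_mul_eq hw
    (Polynomial.degree_C_le.trans_lt (by norm_num : (0 : WithBot ℕ) < (1 : ℕ))) hdiff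
  have hunit : IsUnit (1 + w) := by
    simpa using isUnit_one_sub_self_of_mem_nonunits (-w) (neg_mem hw)
  have hb : b = b' := by
    rw [Polynomial.C_eq_zero, mul_assoc, mul_eq_zero, hunit.mul_right_eq_zero] at hr
    exact sub_eq_zero.1 (hr.resolve_left ht₀)
  subst hb
  rw [sub_self, mul_zero, map_zero, sub_zero, hu.mul_right_eq_zero] at hq
  exact ⟨sub_eq_zero.1 hq, rfl⟩

theorem discr_kernelCubic_eq_zero {t : R} (ht : t ∈ maximalIdeal R) {a : R⟦X⟧} {b : R}
    (h : kernelPoly (C t) X a (C b) = 0) : (kernelCubic t b).discr = 0 := by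
  obtain ⟨w, hw, u, -, hfac⟩ := exists_X_sub_C_mul_eq_C_mul_sub_X ht ((1 + X) * (4 * X * a + 1))
  refine Cubic.discr_eq_zero_of_X_sub_C_sq_dvd hw ⟨u ^ 2, ?_⟩
  simp only [Cubic.toPoly, kernelCubic, Polynomial.coe_add, Polynomial.coe_mul, Polynomial.coe_pow,
    Polynomial.coe_C, Polynomial.coe_X]
  simp only [map_add, map_sub, map_mul, map_pow, map_one, map_ofNat]
  unfold kernelPoly at h
  linear_combination -8 * C t * X * (1 + X) * h
    + (C t * ((1 + X) * (4 * X * a + 1)) - X + (X - C w) * u) * hfac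

end PowerSeries

end KernelEquation

theorem kernelEq1_iff (A : MvPowerSeries (Fin 2) ℚ) (A1 : PowerSeries ℚ) :
    KernelEq1 A A1 ↔ kernelPoly (PowerSeries.C PowerSeries.X) PowerSeries.X
      (bivariateEquiv ℚ A) (PowerSeries.C A1) = 0 := by
  rw [← bivariateEquiv_X_zero, ← bivariateEquiv_X_one, ← bivariateEquiv_embT, ← map_kernelPoly,
    map_eq_zero_iff _ (bivariateEquiv ℚ).injective]
  rfl

/-- (i) There is at most one pair `(A, A₁)` with `A ∈ ℚ[[t,z]]`,
`A₁ ∈ ℚ[[t]]` satisfying the kernel equation; (ii) for any such pair, `A₁` is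
the specialization of `A` at `z = 0`; (iii) for any such pair, `A₁` satisfies
the cubic equation (25) of the paper,
`64t³A₁³ + 2t(24t²−36t+1)A₁² + (−15t³+9t²+19t−1)A₁ + (t³+27t²−19t+1) = 0`. -/
theorem kernelEq1_unique_spec_cubic :
    (∀ (A A' : MvPowerSeries (Fin 2) ℚ) (A1 A1' : PowerSeries ℚ),
      KernelEq1 A A1 → KernelEq1 A' A1' → A = A' ∧ A1 = A1') ∧
    (∀ (A : MvPowerSeries (Fin 2) ℚ) (A1 : PowerSeries ℚ), KernelEq1 A A1 →
      ∀ n : ℕ, PowerSeries.coeff n A1 =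
        MvPowerSeries.coeff (Finsupp.single (0 : Fin 2) n) A) ∧
    (∀ (A : MvPowerSeries (Fin 2) ℚ) (A1 : PowerSeries ℚ), KernelEq1 A A1 →
      64 * PowerSeries.X ^ 3 * A1 ^ 3
        + 2 * PowerSeries.X * (24 * PowerSeries.X ^ 2 - 36 * PowerSeries.X + 1) * A1 ^ 2
        + (-15 * PowerSeries.X ^ 3 + 9 * PowerSeries.X ^ 2 + 19 * PowerSeries.X - 1) * A1
        + (PowerSeries.X ^ 3 + 27 * PowerSeries.X ^ 2 - 19 * PowerSeries.X + 1) = 0) := by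
  have hX : (PowerSeries.X : PowerSeries ℚ) ∈ IsLocalRing.maximalIdeal _ := by
    rw [PowerSeries.maximalIdeal_eq_span_X]
    exact Ideal.mem_span_singleton_self _
  refine ⟨fun A A' A1 A1' h h' => ?_, fun A A1 h n => ?_, fun A A1 h => ?_⟩
  · rw [kernelEq1_iff] at h h'
    obtain ⟨hA, hA1⟩ := PowerSeries.eq_of_kernelPoly_eq_zero hX PowerSeries.X_ne_zero h h'
    exact ⟨(bivariateEquiv ℚ).injective hA, hA1⟩
  · rw [kernelEq1_iff] at h
    rw [PowerSeries.eq_constantCoeff_of_kernelPoly_eq_zero PowerSeries.X_ne_zero h,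
      ← PowerSeries.coeff_zero_eq_constantCoeff_apply, coeff_coeff_bivariateEquiv,
      Finsupp.single_zero, add_zero]
  · rw [kernelEq1_iff] at h
    have hdiscr := PowerSeries.discr_kernelCubic_eq_zero hX h
    rw [discr_kernelCubic] at hdiscr
    have := charZero_of_injective_algebraMap (algebraMap ℚ (PowerSeries ℚ)).injective
    exact (mul_eq_zero.1 hdiscr).resolve_left (mul_ne_zero (by norm_num)
      (pow_ne_zero _ PowerSeries.X_ne_zero))
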